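/- Let k₀, j, m ∈ ℕ, let κ ∈ ℤ with κ ≤ k₀ + m − j, and let n ∈ ℤ. Then there exist complex numbers c_r for r = n−m, n−m+1, …, n+m+k₀−κ such that for every real x, x^j · (d/dx)^m ψ_{k₀,n}(x) = Σ_{r=n−m}^{n+m+k₀−κ} c_r · ψ_{κ,r}(x), where (d/dx)^m denotes the m-th iterated derivative. Moreover the outermost coefficients are c_{n−m} = (−i/2)^{k₀−κ−j+m} · (1/2)^j · Π_{t=1}^{m} (n − t + 1) and c_{n+m+k₀−κ} = (i/2)^{k₀−κ−j+m} · (1/2)^j · (−1)^m · Π_{t=1}^{m} (n + t + k₀) (empty products being 1; note k₀ − κ − j + m ≥ 0). -/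

import Mathlib

/-!
Since `(x + i) ψ_{k,r} = ψ_{k-1,r}` and `(x - i) ψ_{k,r} = ψ_{k-1,r+1}`, writing
`x = ((x + i) + (x - i)) / 2` and `1 = ((x + i) - (x - i)) / (2i)` shows that multiplication
by `x` and by `1` turn an expansion `Σ_{r=a}^{b} c_r ψ_{k,r}` into one in the `ψ_{k-1,r}`,
`a ≤ r ≤ b + 1`, by a two-term recurrence. Likewise `ψ'_{k,r} = r ψ_{k+1,r-1} - (r+k+1) ψ_{k+1,r}`,
so `d/dx` turns it into an expansion in the `ψ_{k+1,r}`, `a - 1 ≤ r ≤ b`. At the two ends of the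
index range only one term of each recurrence survives, so the extreme coefficients are simple
products. Apply `d/dx` `m` times, multiply by `x` `j` times and by `1` another `k₀ + m - j - κ`
times.
-/

/-- The wavepacket basis function `ψ_{k,n}(x) = (x+i)^{-(k+1)} ((x-i)/(x+i))^n`. -/
noncomputable def psi (k n : ℤ) : ℝ → ℂ := fun x =>
  ((x : ℂ) + Complex.I) ^ (-(k + 1)) * (((x : ℂ) - Complex.I) / ((x : ℂ) + Complex.I)) ^ n

open Complex Finset

lemma ofReal_add_I_ne_zero (x : ℝ) : (x : ℂ) + I ≠ 0 := fun h => by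
  simpa using congrArg im h

lemma ofReal_sub_I_ne_zero (x : ℝ) : (x : ℂ) - I ≠ 0 := fun h => by
  simpa using congrArg im h

lemma psi_eq_zpow_mul_zpow (k n : ℤ) (x : ℝ) :
    psi k n x = ((x : ℂ) + I) ^ (-(k + 1 + n)) * ((x : ℂ) - I) ^ n := by
  rw [psi, div_zpow, div_eq_mul_inv, ← zpow_neg, show -(k + 1 + n) = -(k + 1) + -n by ring,
    zpow_add₀ (ofReal_add_I_ne_zero x)]
  ring

lemma add_I_mul_psi (k r : ℤ) (x : ℝ) : ((x : ℂ) + I) * psi k r x = psi (k - 1) r x := by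
  rw [psi_eq_zpow_mul_zpow, psi_eq_zpow_mul_zpow, show -(k - 1 + 1 + r) = -(k + 1 + r) + 1 by ring,
    zpow_add_one₀ (ofReal_add_I_ne_zero x)]
  ring

lemma sub_I_mul_psi (k r : ℤ) (x : ℝ) : ((x : ℂ) - I) * psi k r x = psi (k - 1) (r + 1) x := by
  rw [psi_eq_zpow_mul_zpow, psi_eq_zpow_mul_zpow,
    show -(k - 1 + 1 + (r + 1)) = -(k + 1 + r) by ring,
    zpow_add_one₀ (ofReal_sub_I_ne_zero x)]
  ring

lemma psi_eq_lower (k r : ℤ) (x : ℝ) :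
    psi k r x = -(I / 2) * psi (k - 1) r x + I / 2 * psi (k - 1) (r + 1) x := by
  rw [← add_I_mul_psi, ← sub_I_mul_psi]
  linear_combination psi k r x * I_sq

lemma ofReal_mul_psi (k r : ℤ) (x : ℝ) :
    (x : ℂ) * psi k r x = 1 / 2 * psi (k - 1) r x + 1 / 2 * psi (k - 1) (r + 1) x := by
  rw [← add_I_mul_psi, ← sub_I_mul_psi]
  ring

lemma hasDerivAt_psi (k n : ℤ) (x : ℝ) :
    HasDerivAt (psi k n) (n * psi (k + 1) (n - 1) x - (n + k + 1) * psi (k + 1) n x) x := by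
  have hplus : HasDerivAt (fun z : ℂ => (z + I) ^ (-(k + 1 + n)))
      ((-(k + 1 + n) : ℂ) * ((x : ℂ) + I) ^ (-(k + 1 + n) - 1)) x := by
    simpa [Function.comp_def] using (hasDerivAt_zpow (-(k + 1 + n)) _
      (Or.inl (ofReal_add_I_ne_zero x))).comp (x : ℂ) ((hasDerivAt_id (x : ℂ)).add_const I)
  have hminus : HasDerivAt (fun z : ℂ => (z - I) ^ n) (n * ((x : ℂ) - I) ^ (n - 1)) x := by
    simpa [Function.comp_def] using (hasDerivAt_zpow n _
      (Or.inl (ofReal_sub_I_ne_zero x))).comp (x : ℂ) ((hasDerivAt_id (x : ℂ)).sub_const I)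
  rw [funext (psi_eq_zpow_mul_zpow k n)]
  refine (hplus.mul hminus).comp_ofReal.congr_deriv ?_
  rw [psi_eq_zpow_mul_zpow, psi_eq_zpow_mul_zpow,
    show -(k + 1 + 1 + (n - 1)) = -(k + 1 + n) by ring,
    show -(k + 1 + 1 + n) = -(k + 1 + n) - 1 by ring, zpow_sub_one₀ (ofReal_add_I_ne_zero x)]
  ring

lemma sum_Icc_comp_add_one {M : Type*} [AddCommMonoid M] (a b : ℤ) (g : ℤ → M) :
    ∑ r ∈ Icc a b, g (r + 1) = ∑ r ∈ Icc (a + 1) (b + 1), g r := by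
  rw [← map_add_right_Icc, sum_map]
  rfl

lemma sum_Icc_mul_add_mul_succ {a b : ℤ} {c : ℤ → ℂ} (hc : ∀ r ∉ Icc a b, c r = 0)
    (u v F : ℤ → ℂ) :
    ∑ r ∈ Icc a b, c r * (u r * F r + v r * F (r + 1)) =
      ∑ r ∈ Icc a (b + 1), (u r * c r + v (r - 1) * c (r - 1)) * F r := by
  have hlow : ∑ r ∈ Icc a b, u r * c r * F r = ∑ r ∈ Icc a (b + 1), u r * c r * F r :=
    sum_subset (Icc_subset_Icc le_rfl (by omega)) fun r _ hr => by rw [hc r hr]; ring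
  have hhigh : ∑ r ∈ Icc a b, v r * c r * F (r + 1) =
      ∑ r ∈ Icc a (b + 1), v (r - 1) * c (r - 1) * F r := by
    have := sum_Icc_comp_add_one a b fun r => v (r - 1) * c (r - 1) * F r
    simp only [add_sub_cancel_right] at this
    rw [this]
    exact sum_subset (Icc_subset_Icc (by omega) le_rfl) fun r _ hr => by
      rw [hc (r - 1) (by simp only [mem_Icc] at *; omega)]; ring
  calc ∑ r ∈ Icc a b, c r * (u r * F r + v r * F (r + 1))
      = ∑ r ∈ Icc a b, u r * c r * F r + ∑ r ∈ Icc a b, v r * c r * F (r + 1) := by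
        rw [← sum_add_distrib]; exact sum_congr rfl fun r _ => by ring
    _ = _ := by rw [hlow, hhigh, ← sum_add_distrib]; exact sum_congr rfl fun r _ => by ring

def HasPsiExpansion (k a b : ℤ) (f : ℝ → ℂ) (ca cb : ℂ) : Prop :=
  ∃ c : ℤ → ℂ, (∀ r ∉ Icc a b, c r = 0) ∧ (∀ x, f x = ∑ r ∈ Icc a b, c r * psi k r x) ∧
    c a = ca ∧ c b = cb

lemma hasPsiExpansion_psi (k n : ℤ) : HasPsiExpansion k n n (psi k n) 1 1 :=
  ⟨Pi.single n 1, fun r hr => Pi.single_eq_of_ne (by simpa using hr) _,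
    fun x => by simp, Pi.single_eq_same n 1, Pi.single_eq_same n 1⟩

namespace HasPsiExpansion

variable {k a b : ℤ} {f : ℝ → ℂ} {ca cb : ℂ}

theorem mul_of_mul_psi_eq {g : ℝ → ℂ} {α β : ℂ}
    (hg : ∀ r x, g x * psi k r x = α * psi (k - 1) r x + β * psi (k - 1) (r + 1) x)
    (h : HasPsiExpansion k a b f ca cb) :
    HasPsiExpansion (k - 1) a (b + 1) (fun x => g x * f x) (α * ca) (β * cb) := by
  obtain ⟨c, hc, hf, rfl, rfl⟩ := h
  refine ⟨fun r => α * c r + β * c (r - 1), fun r hr => ?_, fun x => ?_, ?_, ?_⟩ <;> dsimp only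
  · simp only [mem_Icc] at hr
    rw [hc r (by simp only [mem_Icc]; omega), hc (r - 1) (by simp only [mem_Icc]; omega)]
    ring
  · rw [hf x, mul_sum, ← sum_Icc_mul_add_mul_succ hc (fun _ => α) (fun _ => β)]
    exact sum_congr rfl fun r _ => by rw [← hg]; ring
  · simp only [hc (a - 1) (by simp)]
    ring
  · simp only [add_sub_cancel_right, hc (b + 1) (by simp)]
    ring

theorem deriv (h : HasPsiExpansion k a b f ca cb) :
    HasPsiExpansion (k + 1) (a - 1) b (deriv f) (a * ca) (-(b + k + 1) * cb) := by
  obtain ⟨c, hc, hf, rfl, rfl⟩ := h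
  refine ⟨fun r => (r + 1) * c (r + 1) - (r + k + 1) * c r, fun r hr => ?_, fun x => ?_, ?_,
    ?_⟩ <;> dsimp only
  · simp only [mem_Icc] at hr
    rw [hc r (by simp only [mem_Icc]; omega), hc (r + 1) (by simp only [mem_Icc]; omega)]
    ring
  · have hd : HasDerivAt f (∑ r ∈ Icc a b,
        c r * (r * psi (k + 1) (r - 1) x - (r + k + 1) * psi (k + 1) r x)) x := by
      rw [funext hf]
      exact HasDerivAt.fun_sum fun r _ => (hasDerivAt_psi k r x).const_mul (c r)
    rw [hd.deriv]
    calc ∑ r ∈ Icc a b, c r * (r * psi (k + 1) (r - 1) x - (r + k + 1) * psi (k + 1) r x)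
        = ∑ r ∈ Icc a b, c r * ((r : ℂ) * psi (k + 1) (r - 1) x
            + -((r : ℂ) + k + 1) * psi (k + 1) (r + 1 - 1) x) :=
          sum_congr rfl fun r _ => by rw [add_sub_cancel_right]; ring
      _ = ∑ r ∈ Icc a (b + 1), ((r : ℂ) * c r + -(((r - 1 : ℤ) : ℂ) + k + 1) * c (r - 1))
            * psi (k + 1) (r - 1) x :=
          sum_Icc_mul_add_mul_succ hc (fun r => r) (fun r => -((r : ℂ) + k + 1))
            (fun r => psi (k + 1) (r - 1) x)
      _ = _ := by
          rw [← sub_add_cancel a 1, ← sum_Icc_comp_add_one, sub_add_cancel]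
          refine sum_congr rfl fun r _ => ?_
          simp only [add_sub_cancel_right]
          push_cast
          ring
  · simp only [sub_add_cancel, hc (a - 1) (by simp)]
    push_cast
    ring
  · simp only [hc (b + 1) (by simp)]
    ring

theorem iterate_deriv (h : HasPsiExpansion k a b f ca cb) (m : ℕ) :
    HasPsiExpansion (k + m) (a - m) b (_root_.deriv^[m] f)
      ((∏ t ∈ Icc 1 m, ((a : ℂ) - (t : ℂ) + 1)) * ca)
      ((-1) ^ m * (∏ t ∈ Icc 1 m, ((b : ℂ) + (t : ℂ) + k)) * cb) := by
  induction m with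
  | zero => simpa using h
  | succ m ih =>
    rw [Function.iterate_succ_apply', Nat.cast_succ, ← add_assoc, ← sub_sub,
      prod_Icc_succ_top (by omega), prod_Icc_succ_top (by omega)]
    convert ih.deriv using 1 <;> push_cast <;> ring

theorem pow_mul_of_mul_psi_eq {g : ℝ → ℂ} {α β : ℂ}
    (hg : ∀ k r x, g x * psi k r x = α * psi (k - 1) r x + β * psi (k - 1) (r + 1) x)
    (h : HasPsiExpansion k a b f ca cb) (i : ℕ) :
    HasPsiExpansion (k - i) a (b + i) (fun x => g x ^ i * f x) (α ^ i * ca) (β ^ i * cb) := by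
  induction i with
  | zero => simpa using h
  | succ i ih =>
    rw [Nat.cast_succ, ← sub_sub, ← add_assoc]
    convert ih.mul_of_mul_psi_eq (hg _) using 1
    · exact funext fun x => by ring
    all_goals ring

theorem ofReal_pow_mul (h : HasPsiExpansion k a b f ca cb) (j : ℕ) :
    HasPsiExpansion (k - j) a (b + j) (fun x => (x : ℂ) ^ j * f x)
      ((1 / 2) ^ j * ca) ((1 / 2) ^ j * cb) :=
  h.pow_mul_of_mul_psi_eq ofReal_mul_psi j

theorem lower_level (h : HasPsiExpansion k a b f ca cb) (d : ℕ) :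
    HasPsiExpansion (k - d) a (b + d) f ((-(I / 2)) ^ d * ca) ((I / 2) ^ d * cb) := by
  simpa only [one_pow, one_mul] using
    h.pow_mul_of_mul_psi_eq (g := fun _ => 1)
      (fun k r x => (one_mul _).trans (psi_eq_lower k r x)) d

end HasPsiExpansion

/-- For `k₀, j, m ∈ ℕ`, `κ ∈ ℤ` with `κ ≤ k₀ + m - j`, and `n ∈ ℤ`,
the function `x^j (d/dx)^m ψ_{k₀,n}` is a linear combination
`Σ_{r = n-m}^{n+m+k₀-κ} c_r ψ_{κ,r}`, with outermost coefficients
`c_{n-m} = (-i/2)^{k₀-κ-j+m} (1/2)^j Π_{t=1}^m (n - t + 1)` and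
`c_{n+m+k₀-κ} = (i/2)^{k₀-κ-j+m} (1/2)^j (-1)^m Π_{t=1}^m (n + t + k₀)`. -/
theorem stmt8 (k₀ j m : ℕ) (κ : ℤ) (hκ : κ ≤ (k₀ : ℤ) + (m : ℤ) - (j : ℤ)) (n : ℤ) :
    ∃ c : ℤ → ℂ,
      (∀ x : ℝ, ((x : ℂ)) ^ j * deriv^[m] (psi (k₀ : ℤ) n) x =
        ∑ r ∈ Finset.Icc (n - (m : ℤ)) (n + (m : ℤ) + (k₀ : ℤ) - κ), c r * psi κ r x) ∧
      c (n - (m : ℤ)) =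
        (-(Complex.I / 2)) ^ ((k₀ : ℤ) - κ - (j : ℤ) + (m : ℤ)) * ((1 : ℂ) / 2) ^ j *
          ∏ t ∈ Finset.Icc 1 m, ((n : ℂ) - (t : ℂ) + 1) ∧
      c (n + (m : ℤ) + (k₀ : ℤ) - κ) =
        (Complex.I / 2) ^ ((k₀ : ℤ) - κ - (j : ℤ) + (m : ℤ)) * ((1 : ℂ) / 2) ^ j *
          (-1 : ℂ) ^ m * ∏ t ∈ Finset.Icc 1 m, ((n : ℂ) + (t : ℂ) + (k₀ : ℂ)) := by
  obtain ⟨d, hd⟩ : ∃ d : ℕ, (k₀ : ℤ) - κ - j + m = d := Int.eq_ofNat_of_zero_le (by omega)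
  have h := (((hasPsiExpansion_psi k₀ n).iterate_deriv m).ofReal_pow_mul j).lower_level d
  rw [show (k₀ : ℤ) + m - j - d = κ by omega, show n + j + d = n + m + k₀ - κ by omega] at h
  obtain ⟨c, -, hsum, hlow, hhigh⟩ := h
  refine ⟨c, hsum, ?_, ?_⟩ <;> rw [hd, zpow_natCast]
  · rw [hlow]
    ring
  · rw [hhigh]
    push_cast
    ring
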